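/- arXiv:2012.15395 — 2 statements merged into one kernel-verified Lean document; each statement's English description precedes it below -/
import Mathlib

section
/- Let X be a finite topological space, x ∈ X, and let U_x denote the intersection of all open sets containing x. If f, g : [0,1] → X are two paths with f(0) = g(0), f(1) = g(1), and f(t) ∈ U_x and g(t) ∈ U_x for all t ∈ [0,1], then f and g are homotopic relative to their endpoints. -/
/-!
Every point of the minimal open set `U_x` specializes to `x`, so the homotopy that is the
identity for `t < 1` and jumps to `x` at `t = 1` is continuous: the only neighbourhood of `x`
in `U_x` is `U_x` itself. Hence `U_x` is contractible, so simply connected, and two paths with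
the same endpoints inside it are homotopic there, hence in `X`.
-/

open Topology

theorem contractibleSpace_of_forall_specializes {Y : Type*} [TopologicalSpace Y] (y₀ : Y)
    (h : ∀ y, y ⤳ y₀) : ContractibleSpace Y := by
  classical
  rw [contractible_iff_id_nullhomotopic]
  refine ⟨y₀, ⟨{ toFun := fun p : unitInterval × Y => if p.1 = 1 then y₀ else p.2,
                 continuous_toFun := ?_, map_zero_left := by simp, map_one_left := by simp }⟩⟩
  refine continuous_iff_continuousAt.2 fun ⟨t, y⟩ => ?_
  by_cases ht : t = 1
  · simp only [ContinuousAt, ht, if_true]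
    exact Tendsto.specializes tendsto_const_nhds fun p => by split_ifs <;> simp [h]
  · have hnear : ∀ᶠ p : unitInterval × Y in 𝓝 (t, y), p.1 ≠ 1 :=
      (isOpen_compl_singleton.preimage continuous_fst).mem_nhds ht
    exact continuousAt_snd.congr (hnear.mono fun p hp => by simp [hp])

theorem contractibleSpace_nhdsKer_singleton {X : Type*} [TopologicalSpace X] (x : X) :
    ContractibleSpace (nhdsKer {x}) :=
  contractibleSpace_of_forall_specializes ⟨x, subset_nhdsKer rfl⟩ fun y =>
    (subtype_specializes_iff _ _).2 (mem_nhdsKer_singleton.1 y.2)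

theorem Path.Homotopic.of_forall_mem {X : Type*} [TopologicalSpace X] {S : Set X}
    [SimplyConnectedSpace S] {a b : X} {f g : Path a b} (hf : ∀ t, f t ∈ S)
    (hg : ∀ t, g t ∈ S) : f.Homotopic g := by
  let restrict (p : Path a b) (hp : ∀ t, p t ∈ S) :
      Path (⟨a, by simpa using hf 0⟩ : S) ⟨b, by simpa using hf 1⟩ :=
    { toFun := fun t => ⟨p t, hp t⟩
      continuous_toFun := p.continuous.subtype_mk hp
      source' := by simp
      target' := by simp }
  exact (SimplyConnectedSpace.paths_homotopic (restrict f hf) (restrict g hg)).map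
    ⟨Subtype.val, continuous_subtype_val⟩

theorem paths_in_minimal_open_set_homotopic_general (X : Type*) [TopologicalSpace X]
    (x a b : X) (f g : Path a b)
    (hf : ∀ t : unitInterval, f t ∈ ⋂₀ {U : Set X | IsOpen U ∧ x ∈ U})
    (hg : ∀ t : unitInterval, g t ∈ ⋂₀ {U : Set X | IsOpen U ∧ x ∈ U}) :
    f.Homotopic g := by
  have hUx : ⋂₀ {U : Set X | IsOpen U ∧ x ∈ U} = nhdsKer {x} := by
    simp [nhdsKer_def]
  have := contractibleSpace_nhdsKer_singleton x
  exact Path.Homotopic.of_forall_mem (S := nhdsKer {x}) (hUx ▸ hf) (hUx ▸ hg)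

/-- In a finite topological space, any two paths with the same endpoints
whose images lie in the minimal open set `U_x` of a point `x` are homotopic relative to
their endpoints. -/
theorem paths_in_minimal_open_set_homotopic (X : Type*) [Finite X] [TopologicalSpace X]
    (x a b : X) (f g : Path a b)
    (hf : ∀ t : unitInterval, f t ∈ ⋂₀ {U : Set X | IsOpen U ∧ x ∈ U})
    (hg : ∀ t : unitInterval, g t ∈ ⋂₀ {U : Set X | IsOpen U ∧ x ∈ U}) :
    f.Homotopic g :=
  paths_in_minimal_open_set_homotopic_general X x a b f g hf hg
end

section
/- The space Σ_n is simply connected: it is path-connected and every loop in Σ_n based at a'_1 is null-homotopic. -/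
/-- The underlying set of the finite space `Σ_n`: points `a i` (`i` mod `n`),
`a' j`, `b' j` (`j` mod `2n`), and `b i j`, `c i j` (`i` mod `n`, `j` mod `2n`). -/
inductive SigmaSpace (n : ℕ) : Type
  | a (i : ZMod n)
  | a' (j : ZMod (2 * n))
  | b' (j : ZMod (2 * n))
  | b (i : ZMod n) (j : ZMod (2 * n))
  | c (i : ZMod n) (j : ZMod (2 * n))

namespace SigmaSpace

def U {n : ℕ} : SigmaSpace n → Set (SigmaSpace n)
  | c i j => {c i j}
  | b i j => {c i (j - 1), b i j, c i j}
  | b' j => insert (b' j) {x | ∃ i, x = c i j}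
  | a i => insert (a i) ({x | ∃ j, x = b i j} ∪ {x | ∃ j, x = c i j})
  | a' j => {a' j, b' (j - 1), b' j} ∪ {x | ∃ i, x = b i j ∨ x = c i (j - 1) ∨ x = c i j}

instance (n : ℕ) : TopologicalSpace (SigmaSpace n) :=
  TopologicalSpace.generateFrom (Set.range U)

end SigmaSpace

/-!
`U x` is the smallest open neighbourhood of `x` in `Σ_n`, so `Σ_n` is Alexandrov-discrete and
`y ∈ U x` exactly when `y ⤳ x`; for such a pair the path resting at `y` and jumping to `x` at
time `1` is continuous. A path from `u` to `v` inside `U x` is homotopic to the jump path of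
`u ⤳ x` followed by the reverse of that of `v ⤳ x`, so by a Lebesgue subdivision the class of
every path `u → v` is `(φ u)⁻¹ ≫ φ v`, as soon as there are classes `φ x` from the base point
that are compatible with all jump paths. For `Σ_n`, `φ` is assembled from the spokes
`a_i → a'_j` (through `b_{i,j}`) and the rim edges `a'_j → a'_{j+1}` (through `b'_j`): the point
`c_{i,j}` lies below `a_i`, `a'_j` and `a'_{j+1}` and makes the triangle they span commute, so
each `a_i` cones off the cycle of the `a'_j`.
-/

section

open CategoryTheory FundamentalGroupoid Set unitInterval

variable {X : Type*} [TopologicalSpace X] {x y z : X}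

noncomputable def Specializes.path (h : x ⤳ y) : Path x y where
  toFun := piecewise {1} (fun _ => y) (fun _ => x)
  continuous_toFun :=
    isClosed_singleton.continuous_piecewise_of_specializes continuous_const continuous_const
      fun _ => h
  source' := by simp
  target' := by simp

lemma Specializes.range_path (h : x ⤳ y) : range h.path = {x, y} := by
  refine Subset.antisymm ?_
    (insert_subset ⟨0, h.path.source⟩ (singleton_subset_iff.2 ⟨1, h.path.target⟩))
  rintro _ ⟨t, rfl⟩
  by_cases ht : t = 1 <;> simp [Specializes.path, ht]

lemma Path.homotopic_of_forall_specializes {p q : Path x y} (h : ∀ t, p t ⤳ q t) :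
    p.Homotopic q :=
  ⟨{ toFun := piecewise ({1} ×ˢ univ) (fun st => q st.2) (fun st => p st.2)
     continuous_toFun := (isClosed_singleton.prod isClosed_univ).continuous_piecewise_of_specializes
        (q.continuous.comp continuous_snd) (p.continuous.comp continuous_snd) fun st => h st.2
     map_zero_left := fun t => by simp
     map_one_left := fun t => by simp
     prop' := fun s t ht => by rcases ht with rfl | rfl <;> by_cases hs : s = 1 <;> simp [hs] }⟩

noncomputable def Specializes.pathClass (h : x ⤳ y) : mk x ⟶ mk y :=
  fromPath (.mk h.path)

lemma Specializes.pathClass_self (h : x ⤳ x) : h.pathClass = 𝟙 (mk x) := by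
  have : h.path = Path.refl x := by ext t; by_cases ht : t = 1 <;> simp [Specializes.path, ht]
  rw [Specializes.pathClass, this]; rfl

lemma Specializes.pathClass_trans (hxy : x ⤳ y) (hyz : y ⤳ z) :
    (hxy.trans hyz).pathClass = hxy.pathClass ≫ hyz.pathClass := by
  refine Quotient.sound (Path.homotopic_of_forall_specializes fun t => ?_)
  by_cases ht : t = 1
  · subst ht; rw [Path.target, Path.target]
  · have : (hxy.trans hyz).path t = x := by simp [Specializes.path, ht]
    rw [this]
    suffices ∀ w ∈ range (hxy.path.trans hyz.path), x ⤳ w from this _ ⟨t, rfl⟩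
    rw [Path.trans_range, hxy.range_path, hyz.range_path]
    rintro w ((rfl | rfl) | rfl | rfl)
    exacts [specializes_rfl, hxy, hxy, hxy.trans hyz]

lemma Specializes.inv_pathClass_comp_pathClass_eq {y' x₁ x₂ : X} (h : y ⤳ y') (h₁ : y ⤳ x₁)
    (h₂ : y ⤳ x₂) (h₁' : y' ⤳ x₁) (h₂' : y' ⤳ x₂) :
    inv h₁.pathClass ≫ h₂.pathClass = inv h₁'.pathClass ≫ h₂'.pathClass := by
  have e₁ : h₁.pathClass = h.pathClass ≫ h₁'.pathClass := pathClass_trans h h₁'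
  have e₂ : h₂.pathClass = h.pathClass ≫ h₂'.pathClass := pathClass_trans h h₂'
  rw [e₁, e₂]
  simp

theorem ZMod.eq_of_forall_add_one_eq {m : ℕ} {α : Sort*} {f : ZMod m → α}
    (hf : ∀ j, f (j + 1) = f j) (j k : ZMod m) : f j = f k := by
  suffices h : ∀ z : ℤ, f z = f 0 by
    obtain ⟨j, rfl⟩ := ZMod.intCast_surjective j
    obtain ⟨k, rfl⟩ := ZMod.intCast_surjective k
    rw [h, h]
  intro z
  induction z using Int.induction_on with
  | zero => simp
  | succ i ih => rw [Int.cast_add, Int.cast_one, hf, ih]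
  | pred i ih => rw [← ih, Int.cast_sub, Int.cast_one, ← hf, sub_add_cancel]

namespace FundamentalGroupoid

variable {b u v : X}

lemma fromPath_eq_of_forall_specializes (p : Path u v) (hu : u ⤳ x) (hv : v ⤳ x)
    (hp : ∀ t, p t ⤳ x) : fromPath (.mk p) = hu.pathClass ≫ inv hv.pathClass := by
  have hloop : (hu.path.symm.trans (p.trans hv.path)).Homotopic (Path.refl x) := by
    refine Path.homotopic_of_forall_specializes fun t => ?_
    suffices ∀ w ∈ range (hu.path.symm.trans (p.trans hv.path)), w ⤳ x from this _ ⟨t, rfl⟩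
    rw [Path.trans_range, Path.trans_range, Path.symm_range, hu.range_path, hv.range_path]
    rintro w ((rfl | rfl) | ⟨s, rfl⟩ | rfl | rfl)
    exacts [hu, specializes_rfl, hp s, hv, specializes_rfl]
  have : Groupoid.inv hu.pathClass ≫ fromPath (.mk p) ≫ hv.pathClass = 𝟙 (mk x) :=
    Path.Homotopic.Quotient.eq.2 hloop
  rwa [Groupoid.inv_eq_inv, IsIso.inv_comp_eq, ← IsIso.eq_comp_inv, Category.comp_id] at this

theorem fromPath_eq_inv_comp_of_iUnion_eq_univ {ι : Type*} (φ : ∀ x : X, mk b ⟶ mk x)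
    {V : ι → Set X} (hV : ∀ i, IsOpen (V i)) (hcover : ⋃ i, V i = univ)
    (hloc : ∀ i {u v : X} (p : Path u v), range p ⊆ V i → fromPath (.mk p) = inv (φ u) ≫ φ v)
    {u v : X} (p : Path u v) : fromPath (.mk p) = inv (φ u) ≫ φ v := by
  obtain ⟨t, ht0, htmono, ⟨N, hN⟩, hsub⟩ := exists_monotone_Icc_subset_open_cover_unitInterval
    (c := fun i => p ⁻¹' V i) (fun i => (hV i).preimage p.continuous)
    (by rw [← preimage_iUnion, hcover, preimage_univ])
  have key : ∀ k, fromPath (.mk (p.subpath (t 0) (t k))) = inv (φ (p (t 0))) ≫ φ (p (t k)) := by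
    intro k
    induction k with
    | zero => rw [Path.subpath_self, IsIso.inv_hom_id]; rfl
    | succ k ih =>
      obtain ⟨i, hi⟩ := hsub k
      have hstep := hloc i (p.subpath (t k) (t (k + 1))) (by
        rw [Path.range_subpath_of_le _ _ _ (htmono k.le_succ)]
        exact image_subset_iff.2 hi)
      calc fromPath (.mk (p.subpath (t 0) (t (k + 1))))
          = fromPath (.mk (p.subpath (t 0) (t k))) ≫
              fromPath (.mk (p.subpath (t k) (t (k + 1)))) :=
            (Path.Homotopic.Quotient.eq.2 ⟨Path.Homotopy.subpathTransSubpath p _ _ _⟩).symm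
        _ = inv (φ (p (t 0))) ≫ φ (p (t (k + 1))) := by rw [ih, hstep]; simp
  have := key N
  rw [hN N le_rfl, ht0, Path.subpath_zero_one] at this
  obtain ⟨p, rfl, rfl⟩ := p
  exact this

theorem fromPath_eq_inv_comp_of_alexandrovDiscrete [AlexandrovDiscrete X]
    (φ : ∀ x : X, mk b ⟶ mk x) (hφ : ∀ {y x : X} (h : y ⤳ x), φ y ≫ h.pathClass = φ x)
    {u v : X} (p : Path u v) : fromPath (.mk p) = inv (φ u) ≫ φ v := by
  refine fromPath_eq_inv_comp_of_iUnion_eq_univ φ (fun x => isOpen_nhdsKer (s := {x}))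
    (iUnion_eq_univ_iff.2 fun x => ⟨x, mem_nhdsKer_singleton.2 le_rfl⟩) (fun x u v q hq => ?_) p
  have hspec (t : I) : q t ⤳ x := mem_nhdsKer_singleton.1 (hq ⟨t, rfl⟩)
  have hu : u ⤳ x := q.source ▸ hspec 0
  have hv : v ⤳ x := q.target ▸ hspec 1
  have hclass {y : X} (h : y ⤳ x) : h.pathClass = inv (φ y) ≫ φ x := by rw [← hφ h]; simp
  rw [fromPath_eq_of_forall_specializes q hu hv hspec, hclass, hclass]
  simp

end FundamentalGroupoid

theorem simplyConnectedSpace_of_alexandrovDiscrete [AlexandrovDiscrete X]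
    (φ : ∀ x : X, mk b ⟶ mk x) (hφ : ∀ {y x : X} (h : y ⤳ x), φ y ≫ h.pathClass = φ x) :
    SimplyConnectedSpace X := by
  refine simply_connected_iff_paths_homotopic'.2 ⟨⟨⟨b⟩, fun x y => ?_⟩, fun p q => ?_⟩
  · induction inv (φ x) ≫ φ y using Path.Homotopic.Quotient.ind with
    | mk p => exact ⟨p⟩
  · exact Quotient.exact ((fromPath_eq_inv_comp_of_alexandrovDiscrete φ hφ p).trans
      (fromPath_eq_inv_comp_of_alexandrovDiscrete φ hφ q).symm)

namespace SigmaSpace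

variable {n : ℕ}

lemma isOpen_U (x : SigmaSpace n) : IsOpen (U x) := .basic _ ⟨x, rfl⟩

lemma mem_U_self (x : SigmaSpace n) : x ∈ U x := by cases x <;> simp [U]

lemma U_subset_U {x y : SigmaSpace n} (h : y ∈ U x) : U y ⊆ U x := by
  intro z hz
  cases x <;> simp only [U, mem_insert_iff, mem_singleton_iff, mem_union, mem_ofPred_eq] at h ⊢ <;>
    aesop (add simp U)

lemma U_subset_of_isOpen {x : SigmaSpace n} {W : Set (SigmaSpace n)} (hW : IsOpen W)
    (hx : x ∈ W) : U x ⊆ W := by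
  induction hW generalizing x with
  | basic s hs => obtain ⟨z, rfl⟩ := hs; exact U_subset_U hx
  | univ => exact subset_univ _
  | inter s t _ _ ihs iht => exact subset_inter (ihs hx.1) (iht hx.2)
  | sUnion S _ ih =>
    obtain ⟨s, hsS, hxs⟩ := hx
    exact (ih s hsS hxs).trans (subset_sUnion_of_mem hsS)

lemma specializes_iff_mem_U {x y : SigmaSpace n} : y ⤳ x ↔ y ∈ U x :=
  ⟨fun h => h.mem_open (isOpen_U x) (mem_U_self x),
    fun h => specializes_iff_forall_open.2 fun _ hW hx => U_subset_of_isOpen hW hx h⟩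

instance : AlexandrovDiscrete (SigmaSpace n) where
  isOpen_sInter _ hS := isOpen_iff_forall_mem_open.2 fun x hx =>
    ⟨U x, subset_sInter fun W hW => U_subset_of_isOpen (hS W hW) (hx W hW), isOpen_U x,
      mem_U_self x⟩

lemma b'_specializes_a' (j : ZMod (2 * n)) : b' j ⤳ (a' j : SigmaSpace n) :=
  specializes_iff_mem_U.2 (by simp [U])

lemma b'_specializes_a'_add_one (j : ZMod (2 * n)) : b' j ⤳ (a' (j + 1) : SigmaSpace n) :=
  specializes_iff_mem_U.2 (by simp [U])

lemma b_specializes_a (i : ZMod n) (j : ZMod (2 * n)) : b i j ⤳ a i :=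
  specializes_iff_mem_U.2 (by simp [U])

lemma b_specializes_a' (i : ZMod n) (j : ZMod (2 * n)) : b i j ⤳ a' j :=
  specializes_iff_mem_U.2 (by simp [U])

lemma c_specializes_b (i : ZMod n) (j : ZMod (2 * n)) : c i j ⤳ b i j :=
  specializes_iff_mem_U.2 (by simp [U])

lemma c_specializes_b_add_one (i : ZMod n) (j : ZMod (2 * n)) : c i j ⤳ b i (j + 1) :=
  specializes_iff_mem_U.2 (by simp [U])

lemma c_specializes_b' (i : ZMod n) (j : ZMod (2 * n)) : c i j ⤳ b' j :=
  specializes_iff_mem_U.2 (by simp [U])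

noncomputable def spoke (i : ZMod n) (j : ZMod (2 * n)) : mk (a i : SigmaSpace n) ⟶ mk (a' j) :=
  inv (b_specializes_a i j).pathClass ≫ (b_specializes_a' i j).pathClass

noncomputable def rim (j : ZMod (2 * n)) : mk (a' j : SigmaSpace n) ⟶ mk (a' (j + 1)) :=
  inv (b'_specializes_a' j).pathClass ≫ (b'_specializes_a'_add_one j).pathClass

lemma inv_pathClass_comp_pathClass_eq_spoke {i : ZMod n} {j k : ZMod (2 * n)}
    (hb : c i j ⤳ b i k) (ha : c i j ⤳ a i) (ha' : c i j ⤳ a' k) :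
    inv ha.pathClass ≫ ha'.pathClass = spoke i k :=
  hb.inv_pathClass_comp_pathClass_eq ha ha' _ _

lemma spoke_comp_rim (i : ZMod n) (j : ZMod (2 * n)) : spoke i j ≫ rim j = spoke i (j + 1) := by
  have ha := (c_specializes_b i j).trans (b_specializes_a i j)
  have ha' := (c_specializes_b' i j).trans (b'_specializes_a' j)
  have ha'' := (c_specializes_b' i j).trans (b'_specializes_a'_add_one j)
  rw [← inv_pathClass_comp_pathClass_eq_spoke (c_specializes_b i j) ha ha',
    ← inv_pathClass_comp_pathClass_eq_spoke (c_specializes_b_add_one i j) ha ha'', rim,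
    ← (c_specializes_b' i j).inv_pathClass_comp_pathClass_eq ha' ha'']
  simp

lemma inv_spoke_comp_spoke (i : ZMod n) (j : ZMod (2 * n)) :
    inv (spoke i 1) ≫ spoke i j = inv (spoke 0 1) ≫ spoke 0 j := by
  have h := ZMod.eq_of_forall_add_one_eq (f := fun j => spoke i j ≫ inv (spoke 0 j))
    (fun j => by simp [← spoke_comp_rim]) j 1
  rw [IsIso.inv_comp_eq, ← Category.assoc, ← IsIso.comp_inv_eq, ← h]

noncomputable def basePathClass : (x : SigmaSpace n) → (mk (a' (1 : ZMod (2 * n))) ⟶ mk x)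
  | a i => inv (spoke i 1)
  | a' j => inv (spoke 0 1) ≫ spoke 0 j
  | b' j => (inv (spoke 0 1) ≫ spoke 0 j) ≫ inv (b'_specializes_a' j).pathClass
  | b i j => inv (spoke i 1) ≫ inv (b_specializes_a i j).pathClass
  | c i j => inv (spoke i 1) ≫ inv ((c_specializes_b i j).trans (b_specializes_a i j)).pathClass

lemma basePathClass_comp_pathClass_a {y : SigmaSpace n} {i : ZMod n} (h : y ⤳ a i) :
    basePathClass y ≫ h.pathClass = basePathClass (a i) := by
  rcases specializes_iff_mem_U.1 h with rfl | ⟨j, rfl⟩ | ⟨j, rfl⟩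
  · rw [h.pathClass_self, Category.comp_id]
  all_goals simp [basePathClass]

lemma basePathClass_comp_pathClass_a' {y : SigmaSpace n} {j : ZMod (2 * n)} (h : y ⤳ a' j) :
    basePathClass y ≫ h.pathClass = basePathClass (a' j) := by
  obtain ⟨k, rfl⟩ : ∃ k, j = k + 1 := ⟨j - 1, by ring⟩
  have hy := specializes_iff_mem_U.1 h
  simp only [U, add_sub_cancel_right] at hy
  rcases hy with (rfl | rfl | rfl) | ⟨i, rfl | rfl | rfl⟩
  · rw [h.pathClass_self, Category.comp_id]
  · simp only [basePathClass, Category.assoc]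
    rw [show inv _ ≫ h.pathClass = rim k from rfl, spoke_comp_rim]
  · simp [basePathClass]
  · simp only [basePathClass, Category.assoc]
    rw [show inv _ ≫ h.pathClass = spoke i (k + 1) from rfl, inv_spoke_comp_spoke]
  · simp only [basePathClass, Category.assoc]
    rw [inv_pathClass_comp_pathClass_eq_spoke (c_specializes_b_add_one i k), inv_spoke_comp_spoke]
  · simp only [basePathClass, Category.assoc]
    rw [inv_pathClass_comp_pathClass_eq_spoke (c_specializes_b i (k + 1)), inv_spoke_comp_spoke]

def toMaximal : SigmaSpace n → SigmaSpace n
  | a i => a i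
  | a' j => a' j
  | b' j => a' j
  | b i _ => a i
  | c i _ => a i

lemma specializes_toMaximal (x : SigmaSpace n) : x ⤳ toMaximal x :=
  specializes_iff_mem_U.2 (by cases x <;> simp [toMaximal, U])

lemma basePathClass_comp_pathClass {x y : SigmaSpace n} (h : y ⤳ x) :
    basePathClass y ≫ h.pathClass = basePathClass x := by
  have hx := specializes_toMaximal x
  have hmax {y : SigmaSpace n} (h : y ⤳ toMaximal x) :
      basePathClass y ≫ h.pathClass = basePathClass (toMaximal x) := by
    cases x <;>
      first | exact basePathClass_comp_pathClass_a h | exact basePathClass_comp_pathClass_a' h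
  rw [← cancel_mono hx.pathClass, Category.assoc, ← Specializes.pathClass_trans, hmax, hmax]

instance : SimplyConnectedSpace (SigmaSpace n) :=
  simplyConnectedSpace_of_alexandrovDiscrete basePathClass basePathClass_comp_pathClass

end SigmaSpace

end

theorem sigmaSpace_simplyConnected_general (n : ℕ) :
    PathConnectedSpace (SigmaSpace n) ∧
    ∀ γ : Path (SigmaSpace.a' (1 : ZMod (2 * n))) (SigmaSpace.a' 1),
      γ.Homotopic (Path.refl (SigmaSpace.a' 1)) :=
  ⟨inferInstance, fun γ => SimplyConnectedSpace.paths_homotopic γ _⟩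

/-- The space `Σ_n` is simply connected: it is path-connected and every
loop based at `a'_1` is null-homotopic (homotopic rel endpoints to the constant loop). -/
theorem sigmaSpace_simplyConnected (n : ℕ) (hn : 2 ≤ n) :
    PathConnectedSpace (SigmaSpace n) ∧
    ∀ γ : Path (SigmaSpace.a' (1 : ZMod (2 * n))) (SigmaSpace.a' 1),
      γ.Homotopic (Path.refl (SigmaSpace.a' 1)) :=
  sigmaSpace_simplyConnected_general n
end
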